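/- arXiv:2006.13916 — 4 statements merged into one kernel-verified Lean document; each statement's English description precedes it below -/
import Mathlib

section
/- Under the trajectory setup, let ε ≥ 0 and R_max ≥ 0, and define Π_ne to be the set of policies π : S → PMF A such that ∑_{τ} q_π(τ) · ∑_{t=1}^{T−1} KL(q_dyn(· | s_t, a_t) ‖ p_dyn(· | s_t, a_t)) ≤ ε. Assume that for every π ∈ Π_ne and every trajectory τ with q_π(τ) > 0 or p_π(τ) > 0 one has |R_π(τ)| ≤ R_max. Suppose π_DARC ∈ Π_ne maximizes the source entropy-regularized return J_src(π) = ∑_τ q_π(τ) · R_π(τ) over Π_ne, and suppose π* ∈ Π_ne. Then, writing J_tgt(π) = ∑_τ p_π(τ) · R_π(τ), it holds that J_tgt(π_DARC) ≥ J_tgt(π*) − 4 · R_max · √(ε / 2). -/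
/-!
The source and target trajectory laws of a policy share the initial-state and policy factors, so
the log-likelihood ratio of a trajectory is the sum of the per-step log-ratios of the dynamics.
Viewing trajectories as Markov chains on `S × A`, the chain rule for relative entropy then makes
the relative entropy of the source law from the target law exactly `expKL`, hence at most `ε` on
`Π_ne`. Pinsker's inequality turns this into an `ℓ¹` bound `√(2ε) = 2√(ε/2)` between the two laws,
and as returns are bounded by `R_max` wherever either law charges a trajectory, the source and
target returns of a policy in `Π_ne` differ by at most `2 R_max √(ε/2)`. Paying this once for
`π_DARC` and once for `π*`, the source optimality of `π_DARC` gives the bound.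
-/

open Finset

/-- KL divergence between two probability mass functions on a finite type,
with the convention `0 · log 0 = 0` (which holds automatically in `ℝ`). -/
noncomputable def KL {X : Type*} [Fintype X] (μ ν : PMF X) : ℝ :=
  ∑ x, (μ x).toReal * Real.log ((μ x).toReal / (ν x).toReal)

/-- The index `t` of a trajectory, regarded inside `Fin T`. -/
def idx1 {T : ℕ} (t : Fin (T - 1)) : Fin T := ⟨t.1, by have := t.2; omega⟩

/-- The index `t + 1` of a trajectory, regarded inside `Fin T`. -/
def idx2 {T : ℕ} (t : Fin (T - 1)) : Fin T := ⟨t.1 + 1, by have := t.2; omega⟩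

/-- Probability of the trajectory `τ = (s₁, a₁, …, s_T, a_T)` under initial
distribution `p₁`, dynamics `dyn` and policy `π`:
`p₁(s₁) · ∏_{t=1}^{T} π(a_t|s_t) · ∏_{t=1}^{T−1} dyn(s_{t+1}|s_t,a_t)`. -/
noncomputable def trajProb {S A : Type*} {T : ℕ} (hT : 1 ≤ T)
    (p₁ : PMF S) (dyn : S → A → PMF S) (π : S → PMF A)
    (τ : Fin T → S × A) : ℝ :=
  (p₁ (τ ⟨0, hT⟩).1).toReal
    * (∏ t : Fin T, (π (τ t).1 (τ t).2).toReal)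
    * (∏ t : Fin (T - 1), (dyn (τ (idx1 t)).1 (τ (idx1 t)).2 (τ (idx2 t)).1).toReal)

/-- Entropy-regularized return of a trajectory:
`∑_{t=1}^{T} (r(s_t,a_t) − log π(a_t|s_t))`. -/
noncomputable def entReturn {S A : Type*} {T : ℕ}
    (r : S → A → ℝ) (π : S → PMF A) (τ : Fin T → S × A) : ℝ :=
  ∑ t : Fin T, (r (τ t).1 (τ t).2 - Real.log ((π (τ t).1 (τ t).2)).toReal)

/-- The DARC reward correction `Δr(s,a,s') = log p_dyn(s'|s,a) − log q_dyn(s'|s,a)`. -/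
noncomputable def Δr {S A : Type*} (qdyn pdyn : S → A → PMF S)
    (s : S) (a : A) (s' : S) : ℝ :=
  Real.log ((pdyn s a s').toReal) - Real.log ((qdyn s a s').toReal)

/-- Expected (under the source trajectory distribution) sum of per-step KL
divergences between source and target dynamics. -/
noncomputable def expKL {S A : Type*} [Fintype S] [Fintype A] {T : ℕ}
    (hT : 1 ≤ T) (p₁ : PMF S) (qdyn pdyn : S → A → PMF S) (π : S → PMF A) : ℝ :=
  ∑ τ : Fin T → S × A, trajProb hT p₁ qdyn π τ *
    ∑ t : Fin (T - 1),
      KL (qdyn (τ (idx1 t)).1 (τ (idx1 t)).2) (pdyn (τ (idx1 t)).1 (τ (idx1 t)).2)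

section Entropy

open Real

lemma mul_log_div_eq_sub {x y : ℝ} (h : y = 0 → x = 0) :
    x * log (x / y) = x * log x - x * log y := by
  rcases eq_or_ne x 0 with rfl | hx
  · simp
  · rw [log_div hx fun hy => hx (h hy), mul_sub]

lemma mul_log_add_sub_le_mul_log_div {q p c : ℝ} (hq : 0 ≤ q) (hp : 0 ≤ p)
    (hpq : p = 0 → q = 0) (hc : 0 < c) :
    q * log c + q - c * p ≤ q * log (q / p) := by
  rcases hq.eq_or_lt with rfl | hq
  · simpa using mul_nonneg hc.le hp
  have hp : 0 < p := hp.lt_of_ne fun h => hq.ne' (hpq h.symm)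
  have key :=
    mul_le_mul_of_nonneg_left (log_le_sub_one_of_pos (by positivity : 0 < c * p / q)) hq.le
  rw [log_div (by positivity) hq.ne', log_mul hc.ne' hp.ne', mul_sub q _ 1, mul_one,
    mul_div_cancel₀ _ hq.ne'] at key
  rw [log_div hq.ne' hp.ne']
  linarith

lemma sum_mul_log_div_sum_le {ι : Type*} (s : Finset ι) {q p : ι → ℝ}
    (hq : ∀ i ∈ s, 0 ≤ q i) (hp : ∀ i ∈ s, 0 ≤ p i) (hpq : ∀ i ∈ s, p i = 0 → q i = 0) :
    (∑ i ∈ s, q i) * log ((∑ i ∈ s, q i) / ∑ i ∈ s, p i) ≤ ∑ i ∈ s, q i * log (q i / p i) := by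
  rcases (Finset.sum_nonneg hq).eq_or_lt with hQ | hQ
  · have hq0 := (Finset.sum_eq_zero_iff_of_nonneg hq).1 hQ.symm
    rw [← hQ, zero_mul, Finset.sum_eq_zero fun i hi => by rw [hq0 i hi, zero_mul]]
  set Q := ∑ i ∈ s, q i
  set P := ∑ i ∈ s, p i
  have hP : 0 < P := by
    refine (Finset.sum_nonneg hp).lt_of_ne fun hP => hQ.ne' ?_
    have hp0 := (Finset.sum_eq_zero_iff_of_nonneg hp).1 hP.symm
    exact Finset.sum_eq_zero fun i hi => hpq i hi (hp0 i hi)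
  calc Q * log (Q / P) = ∑ i ∈ s, (q i * log (Q / P) + q i - Q / P * p i) := by
        rw [Finset.sum_sub_distrib, Finset.sum_add_distrib, ← Finset.sum_mul, ← Finset.mul_sum,
          div_mul_cancel₀ _ hP.ne', add_sub_cancel_right]
    _ ≤ ∑ i ∈ s, q i * log (q i / p i) := Finset.sum_le_sum fun i hi =>
        mul_log_add_sub_le_mul_log_div (hq i hi) (hp i hi) (hpq i hi) (by positivity)

lemma two_mul_sq_sub_le_bernoulli_relEntropy {a b : ℝ} (ha : 0 ≤ a) (hab : a ≤ b) (hb : b < 1) :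
    2 * (a - b) ^ 2 ≤ a * log (a / b) + (1 - a) * log ((1 - a) / (1 - b)) := by
  -- Up to a constant, `g c` is `KL(Ber a ‖ Ber c) - 2 (a - c)²`; it is monotone on `[a, b]`.
  set g : ℝ → ℝ := fun c => -(a * log c) - (1 - a) * log (1 - c) - 2 * (a - c) ^ 2
  have hderiv : ∀ c ∈ Set.Ioo a b,
      HasDerivAt g ((c - a) * (1 - 2 * c) ^ 2 / (c * (1 - c))) c := by
    rintro c ⟨hac, hcb⟩
    have hc : 0 < c := ha.trans_lt hac
    have hc' : 0 < 1 - c := by linarith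
    have h := (((hasDerivAt_log hc.ne').const_mul a).neg.sub
      (((hasDerivAt_log hc'.ne').comp c ((hasDerivAt_id c).const_sub 1)).const_mul (1 - a))).sub
      (((hasDerivAt_id c).const_sub a).pow 2 |>.const_mul 2)
    refine h.congr_deriv ?_
    simp only [id, Nat.cast_ofNat]
    field_simp
    ring
  have hcont : ContinuousOn g (Set.Icc a b) := by
    have hlog : ContinuousOn (fun c => a * log c) (Set.Icc a b) := by
      rcases ha.eq_or_lt with rfl | ha
      · simpa using continuousOn_const
      · exact continuousOn_const.mul (continuousOn_log.mono fun c hc => (ha.trans_le hc.1).ne')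
    have hlog' : ContinuousOn (fun c => log (1 - c)) (Set.Icc a b) :=
      continuousOn_log.comp (continuousOn_const.sub continuousOn_id) fun c hc => by
        simp only [Set.mem_compl_iff, Set.mem_singleton_iff]; linarith [hc.2]
    exact (hlog.neg.sub (continuousOn_const.mul hlog')).sub (by fun_prop)
  have hmono : MonotoneOn g (Set.Icc a b) := by
    refine monotoneOn_of_deriv_nonneg (convex_Icc a b) hcont ?_ ?_ <;> rw [interior_Icc]
    · exact fun c hc => (hderiv c hc).differentiableAt.differentiableWithinAt
    · intro c hc
      rw [(hderiv c hc).deriv]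
      have hc0 : 0 < c := ha.trans_lt hc.1
      have hc1 : 0 < 1 - c := by linarith [hc.2]
      have : 0 ≤ c - a := by linarith [hc.1]
      positivity
  have := hmono ⟨le_rfl, hab⟩ ⟨hab, le_rfl⟩ hab
  rw [mul_log_div_eq_sub fun hb0 => by linarith, mul_log_div_eq_sub fun h => by linarith]
  simp only [g] at this
  linarith

/-- Since `log (x / 0) = 0`, this is the relative entropy only when `p i = 0 → q i = 0`. -/
noncomputable def relEntropy {ι : Type*} [Fintype ι] (q p : ι → ℝ) : ℝ :=
  ∑ i, q i * log (q i / p i)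

theorem sq_sum_abs_sub_le_two_mul_relEntropy {ι : Type*} [Fintype ι] {q p : ι → ℝ}
    (hq : ∀ i, 0 ≤ q i) (hp : ∀ i, 0 ≤ p i) (hq1 : ∑ i, q i = 1) (hp1 : ∑ i, p i = 1)
    (hpq : ∀ i, p i = 0 → q i = 0) :
    (∑ i, |q i - p i|) ^ 2 ≤ 2 * relEntropy q p := by
  classical
  -- The log-sum inequality on `{q ≤ p}` and on its complement reduces to two points.
  set A := Finset.univ.filter fun i => q i ≤ p i
  set a := ∑ i ∈ A, q i
  set b := ∑ i ∈ A, p i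
  have hqA : ∑ i ∈ Aᶜ, q i = 1 - a := by rw [← hq1, ← Finset.sum_add_sum_compl A]; ring
  have hpA : ∑ i ∈ Aᶜ, p i = 1 - b := by rw [← hp1, ← Finset.sum_add_sum_compl A]; ring
  have hab : a ≤ b := Finset.sum_le_sum fun i hi => (Finset.mem_filter.1 hi).2
  have hb : b ≤ 1 := by linarith [Finset.sum_nonneg fun i (_ : i ∈ Aᶜ) => hp i]
  have htv : ∑ i, |q i - p i| = 2 * (b - a) := by
    rw [← Finset.sum_add_sum_compl A,
      Finset.sum_congr rfl fun i hi => abs_of_nonpos (sub_nonpos.2 (Finset.mem_filter.1 hi).2),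
      Finset.sum_congr rfl fun i hi => abs_of_pos (sub_pos.2 (not_le.1 fun h =>
        Finset.mem_compl.1 hi (Finset.mem_filter.2 ⟨Finset.mem_univ i, h⟩))),
      Finset.sum_neg_distrib, Finset.sum_sub_distrib, Finset.sum_sub_distrib, hqA, hpA]
    ring
  have hkl : a * log (a / b) + (1 - a) * log ((1 - a) / (1 - b)) ≤ relEntropy q p := by
    rw [relEntropy, ← Finset.sum_add_sum_compl A]
    refine add_le_add (sum_mul_log_div_sum_le A (fun i _ => hq i) (fun i _ => hp i)
      fun i _ => hpq i) ?_
    simpa only [hqA, hpA] using sum_mul_log_div_sum_le Aᶜ (fun i _ => hq i) (fun i _ => hp i)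
      fun i _ => hpq i
  have hbin : 2 * (a - b) ^ 2 ≤ a * log (a / b) + (1 - a) * log ((1 - a) / (1 - b)) := by
    rcases hb.lt_or_eq with hb | hb
    · exact two_mul_sq_sub_le_bernoulli_relEntropy (Finset.sum_nonneg fun i _ => hq i) hab hb
    · have hp0 := (Finset.sum_eq_zero_iff_of_nonneg fun i _ => hp i).1
        (hpA.trans (by rw [hb, sub_self]))
      have ha : a = 1 := by
        linarith [Finset.sum_eq_zero (s := Aᶜ) fun i hi => hpq i (hp0 i hi)]
      simp [ha, hb]
  rw [htv]
  nlinarith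

lemma relEntropy_self {ι : Type*} [Fintype ι] (μ : ι → ℝ) : relEntropy μ μ = 0 :=
  Finset.sum_eq_zero fun i _ => by by_cases h : μ i = 0 <;> simp [h]

lemma mul_mul_log_mul_div_mul {a b c d : ℝ} (hac : c = 0 → a = 0) (hbd : d = 0 → b = 0) :
    a * b * log (a * b / (c * d)) = a * b * (log (a / c) + log (b / d)) := by
  rcases eq_or_ne a 0 with rfl | ha
  · simp
  rcases eq_or_ne b 0 with rfl | hb
  · simp
  rw [mul_div_mul_comm, log_mul (div_ne_zero ha fun h => ha (hac h))
    (div_ne_zero hb fun h => hb (hbd h))]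

end Entropy

theorem Fin.sum_univ_fun_snoc {X M : Type*} [Fintype X] [AddCommMonoid M] {n : ℕ}
    (f : (Fin (n + 1) → X) → M) :
    ∑ x, f x = ∑ x : Fin n → X, ∑ y, f (Fin.snoc x y) := by
  rw [← (Fin.snocEquiv fun _ => X).sum_comp, Fintype.sum_prod_type, Finset.sum_comm]
  rfl

section PathWeight

open Real

variable {X : Type*} {μ ν : X → ℝ} {K L : X → X → ℝ}

noncomputable def pathWeight (μ : X → ℝ) (K : X → X → ℝ) {n : ℕ} (x : Fin (n + 1) → X) : ℝ :=
  μ (x 0) * ∏ t : Fin n, K (x t.castSucc) (x t.succ)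

lemma pathWeight_snoc {n : ℕ} (x : Fin (n + 1) → X) (y : X) :
    pathWeight μ K (Fin.snoc x y : Fin (n + 2) → X) = pathWeight μ K x * K (x (Fin.last n)) y := by
  rw [pathWeight, pathWeight, Fin.prod_univ_castSucc]
  simp only [← Fin.castSucc_zero, Fin.snoc_castSucc, Fin.succ_castSucc, Fin.succ_last,
    Fin.snoc_last, mul_assoc]

lemma pathWeight_eq_zero_of_eq_zero (hμν : ∀ x, ν x = 0 → μ x = 0)
    (hKL : ∀ x y, L x y = 0 → K x y = 0) {n : ℕ} {x : Fin (n + 1) → X}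
    (h : pathWeight ν L x = 0) : pathWeight μ K x = 0 := by
  simp only [pathWeight, mul_eq_zero, Finset.prod_eq_zero_iff, Finset.mem_univ, true_and] at h ⊢
  exact h.imp (hμν _) fun ⟨t, ht⟩ => ⟨t, hKL _ _ ht⟩

variable [Fintype X]

lemma sum_pathWeight_mul_init (hK : ∀ x, ∑ y, K x y = 1) {n : ℕ}
    (g : (Fin (n + 1) → X) → ℝ) :
    ∑ x : Fin (n + 2) → X, pathWeight μ K x * g (Fin.init x) = ∑ x, pathWeight μ K x * g x := by
  rw [Fin.sum_univ_fun_snoc]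
  refine Finset.sum_congr rfl fun x _ => ?_
  simp only [pathWeight_snoc, Fin.init_snoc, mul_right_comm _ _ (g x), ← Finset.mul_sum, hK,
    mul_one]

lemma sum_pathWeight (hμ : ∑ x, μ x = 1) (hK : ∀ x, ∑ y, K x y = 1) :
    ∀ n : ℕ, ∑ x : Fin (n + 1) → X, pathWeight μ K x = 1
  | 0 => by simpa [pathWeight] using ((Equiv.funUnique (Fin 1) X).sum_comp μ).trans hμ
  | n + 1 => by
    rw [← sum_pathWeight hμ hK n]
    simpa using sum_pathWeight_mul_init (μ := μ) hK fun _ => 1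

theorem relEntropy_pathWeight (hK : ∀ x, ∑ y, K x y = 1) (hμν : ∀ x, ν x = 0 → μ x = 0)
    (hKL : ∀ x y, L x y = 0 → K x y = 0) :
    ∀ n : ℕ, relEntropy (pathWeight μ K (n := n)) (pathWeight ν L) = relEntropy μ ν +
      ∑ x, pathWeight μ K x * ∑ t : Fin n, relEntropy (K (x t.castSucc)) (L (x t.castSucc))
  | 0 => by
    simpa [relEntropy, pathWeight] using
      (Equiv.funUnique (Fin 1) X).sum_comp fun y => μ y * log (μ y / ν y)
  | n + 1 => by
    have hstep (x : Fin (n + 1) → X) :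
        ∑ y, pathWeight μ K (Fin.snoc x y : Fin (n + 2) → X) *
            log (pathWeight μ K (Fin.snoc x y : Fin (n + 2) → X) /
              pathWeight ν L (Fin.snoc x y : Fin (n + 2) → X)) =
          pathWeight μ K x * log (pathWeight μ K x / pathWeight ν L x) +
            pathWeight μ K x * relEntropy (K (x (Fin.last n))) (L (x (Fin.last n))) := by
      simp only [pathWeight_snoc, mul_mul_log_mul_div_mul
        (pathWeight_eq_zero_of_eq_zero hμν hKL) (hKL _ _), mul_add, Finset.sum_add_distrib]
      congr 1
      · rw [← Finset.sum_mul, ← Finset.mul_sum, hK, mul_one]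
      · rw [relEntropy, Finset.mul_sum]
        exact Finset.sum_congr rfl fun y _ => by ring
    have hinit : ∑ x : Fin (n + 2) → X, pathWeight μ K x *
          ∑ t : Fin (n + 1), relEntropy (K (x t.castSucc)) (L (x t.castSucc)) =
        ∑ x, pathWeight μ K x * ∑ t : Fin (n + 1), relEntropy (K (x t)) (L (x t)) :=
      sum_pathWeight_mul_init hK fun x => ∑ t : Fin (n + 1), relEntropy (K (x t)) (L (x t))
    rw [hinit, relEntropy, Fin.sum_univ_fun_snoc, Finset.sum_congr rfl fun x _ => hstep x,
      Finset.sum_add_distrib, ← relEntropy, relEntropy_pathWeight hK hμν hKL n]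
    simp only [Fin.sum_univ_castSucc, mul_add, Finset.sum_add_distrib, add_assoc]

end PathWeight

lemma PMF.sum_toReal_eq_one {X : Type*} [Fintype X] (μ : PMF X) : ∑ x, (μ x).toReal = 1 := by
  have h := μ.tsum_coe
  rw [tsum_fintype] at h
  rw [← ENNReal.toReal_sum fun x _ => μ.apply_ne_top x, h, ENNReal.toReal_one]

section Trajectory

variable {S A : Type*}

noncomputable def jointLaw (μ : PMF S) (κ : S → PMF A) (x : S × A) : ℝ :=
  (μ x.1).toReal * (κ x.1 x.2).toReal

lemma jointLaw_eq_zero_of_eq_zero {μ ν : PMF S} (h : ∀ s, ν s = 0 → μ s = 0) (κ : S → PMF A)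
    {x : S × A} (hx : jointLaw ν κ x = 0) : jointLaw μ κ x = 0 := by
  simp only [jointLaw, mul_eq_zero, ENNReal.toReal_eq_zero_iff, PMF.apply_ne_top, or_false]
    at hx ⊢
  exact hx.imp_left (h _)

lemma trajProb_eq_pathWeight {n : ℕ} (hT : 1 ≤ n + 1) (p₁ : PMF S) (d : S → A → PMF S)
    (π : S → PMF A) (τ : Fin (n + 1) → S × A) :
    trajProb hT p₁ d π τ = pathWeight (jointLaw p₁ π) (fun x => jointLaw (d x.1 x.2) π) τ := by
  -- `Fin (n + 1 - 1)`, `idx1` and `idx2` unfold to `Fin n`, `castSucc` and `succ`.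
  change _ * _ * ∏ t : Fin n, (d (τ t.castSucc).1 (τ t.castSucc).2 (τ t.succ).1).toReal = _
  simp only [pathWeight, jointLaw, Fin.zero_eta, Fin.prod_univ_succ, Finset.prod_mul_distrib]
  ring

variable {T : ℕ} (hT : 1 ≤ T) (p₁ : PMF S)

lemma trajProb_nonneg (d : S → A → PMF S) (π : S → PMF A) (τ : Fin T → S × A) :
    0 ≤ trajProb hT p₁ d π τ := by
  unfold trajProb
  positivity

variable {qd pd : S → A → PMF S} (π : S → PMF A)

lemma trajProb_eq_zero_of_eq_zero (hp : ∀ s a s', 0 < pd s a s') {τ : Fin T → S × A}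
    (h : trajProb hT p₁ pd π τ = 0) : trajProb hT p₁ qd π τ = 0 := by
  obtain ⟨n, rfl⟩ : ∃ n, T = n + 1 := ⟨T - 1, by omega⟩
  rw [trajProb_eq_pathWeight] at h ⊢
  exact pathWeight_eq_zero_of_eq_zero (fun _ h => h)
    (fun _ _ => jointLaw_eq_zero_of_eq_zero (fun s hs => absurd hs (hp _ _ s).ne') π) h

variable [Fintype S] [Fintype A]

lemma sum_jointLaw (μ : PMF S) (κ : S → PMF A) : ∑ x, jointLaw μ κ x = 1 := by
  simp only [jointLaw, Fintype.sum_prod_type, ← Finset.mul_sum, PMF.sum_toReal_eq_one, mul_one]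

lemma relEntropy_jointLaw (μ ν : PMF S) (κ : S → PMF A) :
    relEntropy (jointLaw μ κ) (jointLaw ν κ) = KL μ ν := by
  rw [relEntropy, KL, Fintype.sum_prod_type]
  refine Finset.sum_congr rfl fun s _ => ?_
  have hterm (a : A) : jointLaw μ κ (s, a) * Real.log (jointLaw μ κ (s, a) / jointLaw ν κ (s, a)) =
      (μ s).toReal * Real.log ((μ s).toReal / (ν s).toReal) * (κ s a).toReal := by
    rcases eq_or_ne (κ s a).toReal 0 with h | h
    · simp [jointLaw, h]
    · rw [jointLaw, jointLaw, mul_div_mul_right _ _ h]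
      ring
  rw [Finset.sum_congr rfl fun a _ => hterm a, ← Finset.mul_sum, PMF.sum_toReal_eq_one, mul_one]

lemma sum_trajProb (d : S → A → PMF S) (π : S → PMF A) : ∑ τ, trajProb hT p₁ d π τ = 1 := by
  obtain ⟨n, rfl⟩ : ∃ n, T = n + 1 := ⟨T - 1, by omega⟩
  simp only [trajProb_eq_pathWeight]
  exact sum_pathWeight (sum_jointLaw p₁ π) (fun x => sum_jointLaw _ π) n

theorem relEntropy_trajProb (hp : ∀ s a s', 0 < pd s a s') :
    relEntropy (trajProb hT p₁ qd π) (trajProb hT p₁ pd π) = expKL hT p₁ qd pd π := by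
  obtain ⟨n, rfl⟩ : ∃ n, T = n + 1 := ⟨T - 1, by omega⟩
  have hKL (x : S × A) (y : S × A) :
      jointLaw (pd x.1 x.2) π y = 0 → jointLaw (qd x.1 x.2) π y = 0 :=
    jointLaw_eq_zero_of_eq_zero (fun s hs => absurd hs (hp _ _ s).ne') π
  have hq : trajProb hT p₁ qd π = pathWeight (jointLaw p₁ π) fun x => jointLaw (qd x.1 x.2) π :=
    funext (trajProb_eq_pathWeight hT p₁ qd π)
  rw [hq, funext (trajProb_eq_pathWeight hT p₁ pd π), relEntropy_pathWeight
    (fun x => sum_jointLaw _ π) (fun _ h => h) hKL n, relEntropy_self, zero_add, expKL, hq]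
  simp only [relEntropy_jointLaw]
  rfl

end Trajectory

lemma abs_sum_mul_sub_sum_mul_le {ι : Type*} [Fintype ι] {q p R : ι → ℝ} {M : ℝ}
    (hR : ∀ i, q i ≠ p i → |R i| ≤ M) :
    |∑ i, q i * R i - ∑ i, p i * R i| ≤ M * ∑ i, |q i - p i| := by
  rw [← Finset.sum_sub_distrib, Finset.mul_sum]
  refine (Finset.abs_sum_le_sum_abs _ _).trans (Finset.sum_le_sum fun i _ => ?_)
  rw [← sub_mul, abs_mul, mul_comm M]
  rcases eq_or_ne (q i) (p i) with h | h
  · simp [h]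
  · exact mul_le_mul_of_nonneg_left (hR i h) (abs_nonneg _)

theorem abs_targetReturn_sub_sourceReturn_le {S A : Type*} [Fintype S] [Fintype A] {T : ℕ}
    (hT : 1 ≤ T) (p₁ : PMF S) {qdyn pdyn : S → A → PMF S} (hp : ∀ s a s', 0 < pdyn s a s')
    (r : S → A → ℝ) {ε Rmax : ℝ} (hR : 0 ≤ Rmax) {π : S → PMF A}
    (hπ : expKL hT p₁ qdyn pdyn π ≤ ε)
    (hbound : ∀ τ : Fin T → S × A,
      (0 < trajProb hT p₁ qdyn π τ ∨ 0 < trajProb hT p₁ pdyn π τ) → |entReturn r π τ| ≤ Rmax) :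
    |∑ τ, trajProb hT p₁ pdyn π τ * entReturn r π τ -
      ∑ τ, trajProb hT p₁ qdyn π τ * entReturn r π τ| ≤ 2 * Rmax * Real.sqrt (ε / 2) := by
  have hpinsker := sq_sum_abs_sub_le_two_mul_relEntropy (trajProb_nonneg hT p₁ qdyn π)
    (trajProb_nonneg hT p₁ pdyn π) (sum_trajProb hT p₁ qdyn π) (sum_trajProb hT p₁ pdyn π)
    fun τ => trajProb_eq_zero_of_eq_zero hT p₁ π hp
  rw [relEntropy_trajProb hT p₁ π hp] at hpinsker
  have htv : (∑ τ, |trajProb hT p₁ qdyn π τ - trajProb hT p₁ pdyn π τ|) / 2 ≤ Real.sqrt (ε / 2) :=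
    (le_abs_self _).trans (Real.abs_le_sqrt (by rw [div_pow]; linarith))
  rw [abs_sub_comm]
  refine (abs_sum_mul_sub_sum_mul_le fun τ hτ => hbound τ ?_).trans ?_
  · rcases (trajProb_nonneg hT p₁ qdyn π τ).lt_or_eq with h | h
    · exact Or.inl h
    · exact Or.inr ((trajProb_nonneg hT p₁ pdyn π τ).lt_of_ne fun h' => hτ (h.symm.trans h'))
  · calc Rmax * ∑ τ, |trajProb hT p₁ qdyn π τ - trajProb hT p₁ pdyn π τ|
        ≤ Rmax * (2 * Real.sqrt (ε / 2)) := mul_le_mul_of_nonneg_left (by linarith) hR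
      _ = 2 * Rmax * Real.sqrt (ε / 2) := by ring

theorem darc_near_optimal_general {S A : Type*} [Fintype S] [Fintype A]
    {T : ℕ} (hT : 1 ≤ T)
    (p₁ : PMF S) (qdyn pdyn : S → A → PMF S)
    (hp : ∀ s a s', 0 < pdyn s a s')
    (r : S → A → ℝ)
    (ε Rmax : ℝ) (hR : 0 ≤ Rmax)
    (hbound : ∀ π : S → PMF A, expKL hT p₁ qdyn pdyn π ≤ ε →
      ∀ τ : Fin T → S × A,
        (0 < trajProb hT p₁ qdyn π τ ∨ 0 < trajProb hT p₁ pdyn π τ) →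
        |entReturn r π τ| ≤ Rmax)
    (πDARC πstar : S → PMF A)
    (hDARC : expKL hT p₁ qdyn pdyn πDARC ≤ ε)
    (hstar : expKL hT p₁ qdyn pdyn πstar ≤ ε)
    (hmax : ∀ π : S → PMF A, expKL hT p₁ qdyn pdyn π ≤ ε →
      (∑ τ : Fin T → S × A, trajProb hT p₁ qdyn π τ * entReturn r π τ)
        ≤ ∑ τ : Fin T → S × A, trajProb hT p₁ qdyn πDARC τ * entReturn r πDARC τ) :
    (∑ τ : Fin T → S × A, trajProb hT p₁ pdyn πDARC τ * entReturn r πDARC τ)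
      ≥ (∑ τ : Fin T → S × A, trajProb hT p₁ pdyn πstar τ * entReturn r πstar τ)
        - 4 * Rmax * Real.sqrt (ε / 2) := by
  have hgapDARC := abs_le.1 <|
    abs_targetReturn_sub_sourceReturn_le hT p₁ hp r hR hDARC (hbound πDARC hDARC)
  have hgapStar := abs_le.1 <|
    abs_targetReturn_sub_sourceReturn_le hT p₁ hp r hR hstar (hbound πstar hstar)
  linarith [hmax πstar hstar]

/-- Theorem 4.1 of "Off-Dynamics Reinforcement Learning": if `π_DARC` maximizes
the source entropy-regularized return over the set `Π_ne` of non-exploiting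
policies (those with expected per-step dynamics KL at most `ε`), and the
target-optimal policy `π*` also lies in `Π_ne` (Assumption 4.1), then `π_DARC`
is `4 R_max √(ε/2)`-optimal for the target entropy-regularized return. -/
theorem darc_near_optimal {S A : Type*} [Fintype S] [Fintype A]
    [Nonempty S] [Nonempty A] {T : ℕ} (hT : 1 ≤ T)
    (p₁ : PMF S) (qdyn pdyn : S → A → PMF S)
    (hq : ∀ s a s', 0 < qdyn s a s') (hp : ∀ s a s', 0 < pdyn s a s')
    (r : S → A → ℝ)
    (ε Rmax : ℝ) (hε : 0 ≤ ε) (hR : 0 ≤ Rmax)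
    (hbound : ∀ π : S → PMF A, expKL hT p₁ qdyn pdyn π ≤ ε →
      ∀ τ : Fin T → S × A,
        (0 < trajProb hT p₁ qdyn π τ ∨ 0 < trajProb hT p₁ pdyn π τ) →
        |entReturn r π τ| ≤ Rmax)
    (πDARC πstar : S → PMF A)
    (hDARC : expKL hT p₁ qdyn pdyn πDARC ≤ ε)
    (hstar : expKL hT p₁ qdyn pdyn πstar ≤ ε)
    (hmax : ∀ π : S → PMF A, expKL hT p₁ qdyn pdyn π ≤ ε →
      (∑ τ : Fin T → S × A, trajProb hT p₁ qdyn π τ * entReturn r π τ)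
        ≤ ∑ τ : Fin T → S × A, trajProb hT p₁ qdyn πDARC τ * entReturn r πDARC τ) :
    (∑ τ : Fin T → S × A, trajProb hT p₁ pdyn πDARC τ * entReturn r πDARC τ)
      ≥ (∑ τ : Fin T → S × A, trajProb hT p₁ pdyn πstar τ * entReturn r πstar τ)
        - 4 * Rmax * Real.sqrt (ε / 2) :=
  darc_near_optimal_general hT p₁ qdyn pdyn hp r ε Rmax hR hbound πDARC πstar hDARC hstar hmax
end

section
/- Under the trajectory setup, define the unnormalized target trajectory weight w(τ) = p₁(s₁) · (∏_{t=1}^{T−1} p_dyn(s_{t+1} | s_t, a_t)) · exp(∑_{t=1}^{T} r(s_t, a_t)), the partition constant Z = ∑_τ w(τ), and the normalized distribution p̂(τ) = w(τ)/Z. Then KL(q_π ‖ p̂) = −∑_τ q_π(τ) · [∑_{t=1}^{T} (r(s_t, a_t) − log π(a_t | s_t)) + ∑_{t=1}^{T−1} Δr(s_t, a_t, s_{t+1})] + log Z. -/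
open Finset

/-- Unnormalized target trajectory weight
`w(τ) = p₁(s₁) · ∏_{t=1}^{T−1} p_dyn(s_{t+1}|s_t,a_t) · exp(∑_{t=1}^{T} r(s_t,a_t))`. -/
noncomputable def wTraj {S A : Type*} {T : ℕ} (hT : 1 ≤ T)
    (p₁ : PMF S) (pdyn : S → A → PMF S) (r : S → A → ℝ)
    (τ : Fin T → S × A) : ℝ :=
  (p₁ (τ ⟨0, hT⟩).1).toReal
    * (∏ t : Fin (T - 1), (pdyn (τ (idx1 t)).1 (τ (idx1 t)).2 (τ (idx2 t)).1).toReal)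
    * Real.exp (∑ t : Fin T, r (τ t).1 (τ t).2)

section Trajectory

variable {S A : Type*}

lemma PMF.sum_prod_toReal_mul_toReal_eq_one [Fintype S] [Fintype A] (μ : PMF S)
    (κ : S → PMF A) : ∑ x : S × A, (μ x.1).toReal * (κ x.1 x.2).toReal = 1 := by
  simp only [Fintype.sum_prod_type, ← mul_sum, PMF.sum_toReal_eq_one, mul_one]

lemma trajProb_fin_one (μ : PMF S) (dyn : S → A → PMF S) (π : S → PMF A)
    (τ : Fin 1 → S × A) :
    trajProb le_rfl μ dyn π τ = (μ (τ 0).1).toReal * (π (τ 0).1 (τ 0).2).toReal := by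
  simp [trajProb]

lemma trajProb_eq_prod_castSucc_succ {n : ℕ} (hT : 1 ≤ n + 1) (μ : PMF S)
    (dyn : S → A → PMF S) (π : S → PMF A) (τ : Fin (n + 1) → S × A) :
    trajProb hT μ dyn π τ
      = (μ (τ 0).1).toReal * (∏ t, (π (τ t).1 (τ t).2).toReal)
        * ∏ t : Fin n, (dyn (τ t.castSucc).1 (τ t.castSucc).2 (τ t.succ).1).toReal :=
  rfl

lemma trajProb_cons {n : ℕ} (hT : 1 ≤ n + 1 + 1) (hT' : 1 ≤ n + 1) (μ : PMF S)
    (dyn : S → A → PMF S) (π : S → PMF A) (x : S × A) (τ : Fin (n + 1) → S × A) :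
    trajProb hT μ dyn π (Fin.cons x τ)
      = (μ x.1).toReal * (π x.1 x.2).toReal * trajProb hT' (dyn x.1 x.2) dyn π τ := by
  simp only [trajProb_eq_prod_castSucc_succ, Fin.prod_univ_succ, Fin.cons_zero, Fin.cons_succ,
    Fin.castSucc_zero, ← Fin.succ_castSucc]
  ring

theorem sum_trajProb_eq_one [Fintype S] [Fintype A] {T : ℕ} (hT : 1 ≤ T) (μ : PMF S)
    (dyn : S → A → PMF S) (π : S → PMF A) :
    ∑ τ : Fin T → S × A, trajProb hT μ dyn π τ = 1 := by
  obtain ⟨n, rfl⟩ := Nat.exists_eq_add_of_le' hT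
  induction n generalizing μ with
  | zero =>
    rw [← (Equiv.funUnique (Fin 1) (S × A)).symm.sum_comp]
    simpa [trajProb_fin_one] using PMF.sum_prod_toReal_mul_toReal_eq_one μ π
  | succ n ih =>
    rw [← (Fin.consEquiv _).sum_comp, Fintype.sum_prod_type]
    change ∑ x, ∑ τ, trajProb hT μ dyn π (Fin.cons x τ) = 1
    simp only [trajProb_cons hT (Nat.le_add_left 1 n), ← mul_sum, ih, mul_one]
    exact PMF.sum_prod_toReal_mul_toReal_eq_one μ π

lemma log_trajProb {T : ℕ} {hT : 1 ≤ T} {μ : PMF S} {dyn : S → A → PMF S} {π : S → PMF A}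
    {τ : Fin T → S × A} (h : trajProb hT μ dyn π τ ≠ 0) :
    Real.log (trajProb hT μ dyn π τ)
      = Real.log (μ (τ ⟨0, hT⟩).1).toReal + ∑ t, Real.log (π (τ t).1 (τ t).2).toReal
        + ∑ t : Fin (T - 1),
            Real.log (dyn (τ (idx1 t)).1 (τ (idx1 t)).2 (τ (idx2 t)).1).toReal := by
  unfold trajProb at h ⊢
  obtain ⟨⟨hμ, hπ⟩, hdyn⟩ := by simpa only [mul_ne_zero_iff] using h
  rw [Real.log_mul (mul_ne_zero hμ hπ) hdyn, Real.log_mul hμ hπ,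
    Real.log_prod (prod_ne_zero_iff.mp hπ), Real.log_prod (prod_ne_zero_iff.mp hdyn)]

lemma log_wTraj {T : ℕ} {hT : 1 ≤ T} {p₁ : PMF S} {pdyn : S → A → PMF S} {r : S → A → ℝ}
    {τ : Fin T → S × A} (h : wTraj hT p₁ pdyn r τ ≠ 0) :
    Real.log (wTraj hT p₁ pdyn r τ)
      = Real.log (p₁ (τ ⟨0, hT⟩).1).toReal
        + ∑ t : Fin (T - 1), Real.log (pdyn (τ (idx1 t)).1 (τ (idx1 t)).2 (τ (idx2 t)).1).toReal
        + ∑ t, r (τ t).1 (τ t).2 := by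
  unfold wTraj at h ⊢
  obtain ⟨⟨hp₁, hpdyn⟩, -⟩ := by simpa only [mul_ne_zero_iff] using h
  rw [Real.log_mul (mul_ne_zero hp₁ hpdyn) (Real.exp_ne_zero _), Real.log_mul hp₁ hpdyn,
    Real.log_prod (prod_ne_zero_iff.mp hpdyn), Real.log_exp]

lemma wTraj_pos {T : ℕ} (hT : 1 ≤ T) {p₁ : PMF S} {pdyn : S → A → PMF S} (r : S → A → ℝ)
    (hp₁ : ∀ s, 0 < p₁ s) (hp : ∀ s a s', 0 < pdyn s a s') (τ : Fin T → S × A) :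
    0 < wTraj hT p₁ pdyn r τ := by
  have hp₁' := ENNReal.toReal_pos (hp₁ (τ ⟨0, hT⟩).1).ne' (p₁.apply_ne_top _)
  have hp' s a s' := ENNReal.toReal_pos (hp s a s').ne' ((pdyn s a).apply_ne_top s')
  exact mul_pos (mul_pos hp₁' (prod_pos fun t _ => hp' _ _ _)) (Real.exp_pos _)

lemma log_trajProb_div_wTraj_div {T : ℕ} {hT : 1 ≤ T} {p₁ : PMF S}
    {qdyn pdyn : S → A → PMF S} {r : S → A → ℝ} {π : S → PMF A} {Z : ℝ}
    {τ : Fin T → S × A} (hq : trajProb hT p₁ qdyn π τ ≠ 0) (hw : wTraj hT p₁ pdyn r τ ≠ 0)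
    (hZ : Z ≠ 0) :
    Real.log (trajProb hT p₁ qdyn π τ / (wTraj hT p₁ pdyn r τ / Z))
      = -(entReturn r π τ
          + ∑ t : Fin (T - 1), Δr qdyn pdyn (τ (idx1 t)).1 (τ (idx1 t)).2 (τ (idx2 t)).1)
        + Real.log Z := by
  rw [Real.log_div hq (div_ne_zero hw hZ), Real.log_div hw hZ, log_trajProb hq, log_wTraj hw]
  simp only [entReturn, Δr, sum_sub_distrib]
  ring

end Trajectory

theorem darc_variational_identity_general {S A : Type*} [Fintype S] [Fintype A]
    [Nonempty S] [Nonempty A] {T : ℕ} (hT : 1 ≤ T)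
    (p₁ : PMF S) (hp₁ : ∀ s, 0 < p₁ s)
    (qdyn pdyn : S → A → PMF S)
    (hp : ∀ s a s', 0 < pdyn s a s')
    (r : S → A → ℝ) (π : S → PMF A)
    (Z : ℝ) (hZ : Z = ∑ τ : Fin T → S × A, wTraj hT p₁ pdyn r τ) :
    (∑ τ : Fin T → S × A, trajProb hT p₁ qdyn π τ *
        Real.log (trajProb hT p₁ qdyn π τ / (wTraj hT p₁ pdyn r τ / Z)))
      = -(∑ τ : Fin T → S × A, trajProb hT p₁ qdyn π τ *
            (entReturn r π τ +
              ∑ t : Fin (T - 1),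
                Δr qdyn pdyn (τ (idx1 t)).1 (τ (idx1 t)).2 (τ (idx2 t)).1))
        + Real.log Z := by
  have hw := wTraj_pos hT r hp₁ hp
  have hZ_pos : 0 < Z := hZ ▸ sum_pos (fun τ _ => hw τ) univ_nonempty
  have pointwise : ∀ τ, trajProb hT p₁ qdyn π τ *
        Real.log (trajProb hT p₁ qdyn π τ / (wTraj hT p₁ pdyn r τ / Z))
      = trajProb hT p₁ qdyn π τ * (-(entReturn r π τ
          + ∑ t : Fin (T - 1), Δr qdyn pdyn (τ (idx1 t)).1 (τ (idx1 t)).2 (τ (idx2 t)).1)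
          + Real.log Z) := by
    intro τ
    rcases eq_or_ne (trajProb hT p₁ qdyn π τ) 0 with h | h
    · simp only [h, zero_mul]
    · rw [log_trajProb_div_wTraj_div h (hw τ).ne' hZ_pos.ne']
  simp only [pointwise, mul_add, mul_neg, sum_add_distrib, sum_neg_distrib, ← sum_mul,
    sum_trajProb_eq_one, one_mul]

/-- The variational identity (Equation 2) of "Off-Dynamics Reinforcement
Learning": the reverse KL divergence between the agent's source trajectory
distribution `q_π` and the exponentiated-reward target trajectory distribution
`p̂ = w/Z` equals, up to the constant `log Z`, the negative expected
entropy-regularized return augmented with the reward correction `Δr`. -/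
theorem darc_variational_identity {S A : Type*} [Fintype S] [Fintype A]
    [Nonempty S] [Nonempty A] {T : ℕ} (hT : 1 ≤ T)
    (p₁ : PMF S) (hp₁ : ∀ s, 0 < p₁ s)
    (qdyn pdyn : S → A → PMF S)
    (hq : ∀ s a s', 0 < qdyn s a s') (hp : ∀ s a s', 0 < pdyn s a s')
    (r : S → A → ℝ) (π : S → PMF A)
    (Z : ℝ) (hZ : Z = ∑ τ : Fin T → S × A, wTraj hT p₁ pdyn r τ) :
    (∑ τ : Fin T → S × A, trajProb hT p₁ qdyn π τ *
        Real.log (trajProb hT p₁ qdyn π τ / (wTraj hT p₁ pdyn r τ / Z)))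
      = -(∑ τ : Fin T → S × A, trajProb hT p₁ qdyn π τ *
            (entReturn r π τ +
              ∑ t : Fin (T - 1),
                Δr qdyn pdyn (τ (idx1 t)).1 (τ (idx1 t)).2 (τ (idx2 t)).1))
        + Real.log Z :=
  darc_variational_identity_general hT p₁ hp₁ qdyn pdyn hp r π Z hZ
end

section
/- Under the trajectory setup, the expected total reward correction under the source trajectory distribution equals the negative sum of expected per-step transition KL divergences: ∑_τ q_π(τ) · ∑_{t=1}^{T−1} Δr(s_t, a_t, s_{t+1}) = −∑_{t=1}^{T−1} ∑_τ q_π(τ) · KL(q_dyn(· | s_t, a_t) ‖ p_dyn(· | s_t, a_t)). -/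
open Finset

/-! ### Auxiliary lemmas -/

lemma pmf_sum_toReal {X : Type*} [Fintype X] (p : PMF X) :
    ∑ x, (p x).toReal = 1 := by
  have h := p.tsum_coe
  rw [tsum_fintype] at h
  rw [← ENNReal.toReal_sum (fun _ _ => p.apply_ne_top _), h, ENNReal.toReal_one]

section Aux

variable {S A : Type*} [Fintype S] [Fintype A]

omit [Fintype S] [Fintype A] in
lemma append_at₁ {α : Type*} {n k : ℕ} (ρ : Fin (n+1) → α) (χ : Fin (k+1) → α)
    (i : Fin ((n+1)+(k+1))) (j : Fin (n+1)) (h : i.1 = j.1) :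
    Fin.append ρ χ i = ρ j := by
  have : i = Fin.castAdd (k+1) j := Fin.ext (by simpa using h)
  rw [this, Fin.append_left]

omit [Fintype S] [Fintype A] in
lemma append_at₂ {α : Type*} {n k : ℕ} (ρ : Fin (n+1) → α) (χ : Fin (k+1) → α)
    (i : Fin ((n+1)+(k+1))) (j : Fin (k+1)) (h : i.1 = (n+1) + j.1) :
    Fin.append ρ χ i = χ j := by
  have : i = Fin.natAdd (n+1) j := Fin.ext (by simpa using h)
  rw [this, Fin.append_right]

lemma sumSA (π : S → PMF A) (c : S → ℝ) :
    ∑ x : S × A, (π x.1 x.2).toReal * c x.1 = ∑ s, c s := by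
  rw [Fintype.sum_prod_type]
  refine Finset.sum_congr rfl fun s _ => ?_
  show ∑ a : A, (π s a).toReal * c s = c s
  rw [← Finset.sum_mul, pmf_sum_toReal, one_mul]

/-- Weight of a trajectory tail `χ` started from `z`. -/
noncomputable def Wflat (qdyn : S → A → PMF S) (π : S → PMF A)
    (k : ℕ) (z : S × A) (χ : Fin (k + 1) → S × A) : ℝ :=
  (∏ j, (π (χ j).1 (χ j).2).toReal) *
    ((qdyn z.1 z.2 (χ 0).1).toReal *
      ∏ j : Fin k, (qdyn (χ j.castSucc).1 (χ j.castSucc).2 (χ j.succ).1).toReal)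

omit [Fintype S] [Fintype A] in
lemma Wflat_cons (qdyn : S → A → PMF S) (π : S → PMF A) (k : ℕ) (z x : S × A)
    (σ : Fin (k + 1) → S × A) :
    Wflat qdyn π (k + 1) z (Fin.cons x σ)
      = (qdyn z.1 z.2 x.1).toReal * (π x.1 x.2).toReal * Wflat qdyn π k x σ := by
  have hπ : (∏ j : Fin (k+2), (π ((Fin.cons x σ : Fin (k+2) → S × A) j).1
        ((Fin.cons x σ : Fin (k+2) → S × A) j).2).toReal)
      = (π x.1 x.2).toReal * ∏ j : Fin (k+1), (π (σ j).1 (σ j).2).toReal := by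
    rw [Fin.prod_univ_succ]
    simp [Fin.cons_succ]
  have htr : (∏ j : Fin (k+1), (qdyn ((Fin.cons x σ : Fin (k+2) → S × A) j.castSucc).1
        ((Fin.cons x σ : Fin (k+2) → S × A) j.castSucc).2
        ((Fin.cons x σ : Fin (k+2) → S × A) j.succ).1).toReal)
      = (qdyn x.1 x.2 (σ 0).1).toReal *
        ∏ j : Fin k, (qdyn (σ j.castSucc).1 (σ j.castSucc).2 (σ j.succ).1).toReal := by
    rw [Fin.prod_univ_succ]
    simp [← Fin.succ_castSucc, Fin.cons_succ, Fin.cons_zero, Fin.cons_one]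
  unfold Wflat
  rw [hπ, htr, Fin.cons_zero]
  ring

lemma chainG (qdyn : S → A → PMF S) (π : S → PMF A) :
    ∀ (k : ℕ) (z : S × A) (g : S → ℝ),
    ∑ χ : Fin (k + 1) → S × A, Wflat qdyn π k z χ * g ((χ 0).1)
      = ∑ s', (qdyn z.1 z.2 s').toReal * g s' := by
  intro k
  induction k with
  | zero =>
    intro z g
    rw [← Fintype.sum_equiv (Fin.consEquiv (fun _ : Fin 1 => S × A))
        (fun p => (π p.1.1 p.1.2).toReal * ((qdyn z.1 z.2 p.1.1).toReal * g p.1.1))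
        (fun χ => Wflat qdyn π 0 z χ * g ((χ 0)).1)
        (fun p => by simp [Wflat, Fin.cons_zero]; ring)]
    rw [Fintype.sum_prod_type]
    have : ∀ x : S × A, (∑ _σ : Fin 0 → S × A,
        (π x.1 x.2).toReal * ((qdyn z.1 z.2 x.1).toReal * g x.1))
        = (π x.1 x.2).toReal * ((qdyn z.1 z.2 x.1).toReal * g x.1) := by
      intro x
      rw [Finset.sum_const]
      simp
    rw [Finset.sum_congr rfl fun x _ => this x]
    exact sumSA π (fun s => (qdyn z.1 z.2 s).toReal * g s)
  | succ k ih =>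
    intro z g
    rw [← Fintype.sum_equiv (Fin.consEquiv (fun _ : Fin (k+2) => S × A))
        (fun p => (qdyn z.1 z.2 p.1.1).toReal * (π p.1.1 p.1.2).toReal
            * Wflat qdyn π k p.1 p.2 * g p.1.1)
        (fun χ => Wflat qdyn π (k+1) z χ * g ((χ 0)).1)
        (fun p => by
          obtain ⟨x, σ⟩ := p
          have hc : ((Fin.consEquiv fun _ : Fin (k+2) => S × A) (x, σ))
              = (Fin.cons x σ : Fin (k+2) → S × A) := rfl
          rw [hc]
          show ((qdyn z.1 z.2) x.1).toReal * ((π x.1) x.2).toReal * Wflat qdyn π k x σ * g x.1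
            = Wflat qdyn π (k+1) z (Fin.cons x σ) *
              g (((Fin.cons x σ : Fin (k+2) → S × A)) 0).1
          rw [Wflat_cons, Fin.cons_zero])]
    rw [Fintype.sum_prod_type]
    have step : ∀ x : S × A,
        (∑ σ : Fin (k+1) → S × A,
          (qdyn z.1 z.2 x.1).toReal * (π x.1 x.2).toReal * Wflat qdyn π k x σ * g x.1)
        = (π x.1 x.2).toReal * ((qdyn z.1 z.2 x.1).toReal * g x.1) := by
      intro x
      have h1 : ∑ σ : Fin (k+1) → S × A, Wflat qdyn π k x σ = 1 := by
        have h2 := ih x (fun _ => 1)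
        simp only [mul_one] at h2
        rw [h2, pmf_sum_toReal]
      calc (∑ σ : Fin (k+1) → S × A,
          (qdyn z.1 z.2 x.1).toReal * (π x.1 x.2).toReal * Wflat qdyn π k x σ * g x.1)
          = (∑ σ : Fin (k+1) → S × A, Wflat qdyn π k x σ) *
              ((qdyn z.1 z.2 x.1).toReal * (π x.1 x.2).toReal * g x.1) := by
            rw [Finset.sum_mul]; exact Finset.sum_congr rfl fun σ _ => by ring
        _ = (π x.1 x.2).toReal * ((qdyn z.1 z.2 x.1).toReal * g x.1) := by
            rw [h1, one_mul]; ring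
    rw [Finset.sum_congr rfl fun x _ => step x]
    exact sumSA π (fun s => (qdyn z.1 z.2 s).toReal * g s)

/-- Weight of a trajectory prefix. -/
noncomputable def PW (p₁ : PMF S) (qdyn : S → A → PMF S) (π : S → PMF A)
    (n : ℕ) (ρ : Fin (n+1) → S × A) : ℝ :=
  (p₁ (ρ 0).1).toReal * (∏ i, (π (ρ i).1 (ρ i).2).toReal) *
    ∏ u : Fin n, (qdyn (ρ u.castSucc).1 (ρ u.castSucc).2 (ρ u.succ).1).toReal

lemma trajProb_append (p₁ : PMF S) (qdyn : S → A → PMF S) (π : S → PMF A) (n k : ℕ)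
    (ρ : Fin (n+1) → S × A) (χ : Fin (k+1) → S × A) :
    trajProb (T := (n+1)+(k+1)) (by omega) p₁ qdyn π (Fin.append ρ χ)
      = PW p₁ qdyn π n ρ * Wflat qdyn π k (ρ (Fin.last n)) χ := by
  unfold trajProb PW Wflat
  have h0 : Fin.append ρ χ ⟨0, by omega⟩ = ρ 0 :=
    append_at₁ ρ χ _ 0 (by simp)
  have hπ : (∏ t : Fin ((n+1)+(k+1)),
        (π ((Fin.append ρ χ) t).1 ((Fin.append ρ χ) t).2).toReal)
      = (∏ i : Fin (n+1), (π (ρ i).1 (ρ i).2).toReal)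
        * ∏ j : Fin (k+1), (π (χ j).1 (χ j).2).toReal := by
    rw [Fin.prod_univ_add]
    congr 1
    · exact Finset.prod_congr rfl fun i _ => by rw [Fin.append_left]
    · exact Finset.prod_congr rfl fun j _ => by rw [Fin.append_right]
  have htr : (∏ t : Fin ((n+1)+(k+1) - 1),
        (qdyn ((Fin.append ρ χ) (idx1 t)).1 ((Fin.append ρ χ) (idx1 t)).2
          ((Fin.append ρ χ) (idx2 t)).1).toReal)
      = ((∏ u : Fin n, (qdyn (ρ u.castSucc).1 (ρ u.castSucc).2 (ρ u.succ).1).toReal)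
          * (qdyn (ρ (Fin.last n)).1 (ρ (Fin.last n)).2 (χ 0).1).toReal)
        * ∏ v : Fin k, (qdyn (χ v.castSucc).1 (χ v.castSucc).2 (χ v.succ).1).toReal := by
    have hsplit : (∏ t : Fin ((n+1)+(k+1) - 1),
          (qdyn ((Fin.append ρ χ) (idx1 t)).1 ((Fin.append ρ χ) (idx1 t)).2
            ((Fin.append ρ χ) (idx2 t)).1).toReal)
        = ∏ t : Fin ((n+1)+k),
          (qdyn ((Fin.append ρ χ) (idx1 (T := (n+1)+(k+1)) t)).1
            ((Fin.append ρ χ) (idx1 (T := (n+1)+(k+1)) t)).2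
            ((Fin.append ρ χ) (idx2 (T := (n+1)+(k+1)) t)).1).toReal := rfl
    rw [hsplit, Fin.prod_univ_add]
    congr 1
    · rw [Fin.prod_univ_castSucc]
      congr 1
      · refine Finset.prod_congr rfl fun u _ => ?_
        rw [append_at₁ ρ χ _ u.castSucc rfl, append_at₁ ρ χ _ u.succ rfl]
      · rw [append_at₁ ρ χ _ (Fin.last n) rfl, append_at₂ ρ χ _ 0 (by simp [idx2])]
    · refine Finset.prod_congr rfl fun v _ => ?_
      rw [append_at₂ ρ χ _ v.castSucc rfl, append_at₂ ρ χ _ v.succ (by simp [idx2]; omega)]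
  rw [h0, hπ, htr]
  ring

end Aux

section Key

variable {S A : Type*} [Fintype S] [Fintype A]

lemma keyB (p₁ : PMF S) (qdyn : S → A → PMF S) (π : S → PMF A) (n k : ℕ)
    (f : S → A → S → ℝ)
    (hf : ∀ s a, ∑ s', (qdyn s a s').toReal * f s a s' = 0) :
    ∑ τ : Fin ((n+1)+(k+1)) → S × A, trajProb (by omega) p₁ qdyn π τ *
      f (τ ⟨n, by omega⟩).1 (τ ⟨n, by omega⟩).2 (τ ⟨n+1, by omega⟩).1 = 0 := by
  rw [← Fintype.sum_equiv (Fin.appendEquiv (n+1) (k+1))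
      (fun p => PW p₁ qdyn π n p.1 * (Wflat qdyn π k (p.1 (Fin.last n)) p.2
          * f (p.1 (Fin.last n)).1 (p.1 (Fin.last n)).2 ((p.2 0).1)))
      (fun τ => trajProb (by omega) p₁ qdyn π τ *
        f (τ ⟨n, by omega⟩).1 (τ ⟨n, by omega⟩).2 (τ ⟨n+1, by omega⟩).1)
      (fun p => by
        obtain ⟨ρ, χ⟩ := p
        have hc : (Fin.appendEquiv (n+1) (k+1) (ρ, χ)) = Fin.append ρ χ := rfl
        show PW p₁ qdyn π n ρ * (Wflat qdyn π k (ρ (Fin.last n)) χ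
            * f (ρ (Fin.last n)).1 (ρ (Fin.last n)).2 ((χ 0).1))
          = trajProb (by omega) p₁ qdyn π (Fin.appendEquiv (n+1) (k+1) (ρ, χ)) *
            f ((Fin.appendEquiv (n+1) (k+1) (ρ, χ)) ⟨n, by omega⟩).1
              ((Fin.appendEquiv (n+1) (k+1) (ρ, χ)) ⟨n, by omega⟩).2
              ((Fin.appendEquiv (n+1) (k+1) (ρ, χ)) ⟨n+1, by omega⟩).1
        rw [hc, trajProb_append p₁ qdyn π n k ρ χ,
          append_at₁ ρ χ ⟨n, by omega⟩ (Fin.last n) rfl,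
          append_at₂ ρ χ ⟨n+1, by omega⟩ 0 (by simp)]
        ring)]
  rw [Fintype.sum_prod_type]
  have hz : ∀ ρ : Fin (n+1) → S × A,
      (∑ χ : Fin (k+1) → S × A, PW p₁ qdyn π n ρ * (Wflat qdyn π k (ρ (Fin.last n)) χ
        * f (ρ (Fin.last n)).1 (ρ (Fin.last n)).2 ((χ 0).1))) = 0 := by
    intro ρ
    rw [← Finset.mul_sum,
      chainG qdyn π k (ρ (Fin.last n)) (f (ρ (Fin.last n)).1 (ρ (Fin.last n)).2),
      hf, mul_zero]
  rw [Finset.sum_congr rfl fun ρ _ => hz ρ, Finset.sum_const_zero]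

lemma keyBt {T : ℕ} (hT : 1 ≤ T) (t : Fin (T - 1))
    (p₁ : PMF S) (qdyn : S → A → PMF S) (π : S → PMF A)
    (f : S → A → S → ℝ)
    (hf : ∀ s a, ∑ s', (qdyn s a s').toReal * f s a s' = 0) :
    ∑ τ : Fin T → S × A, trajProb hT p₁ qdyn π τ *
      f (τ (idx1 t)).1 (τ (idx1 t)).2 (τ (idx2 t)).1 = 0 := by
  obtain ⟨n, k, hnk, ht⟩ : ∃ n k, T = (n+1)+(k+1) ∧ t.1 = n :=
    ⟨t.1, T - t.1 - 2, by have := t.2; omega, rfl⟩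
  subst hnk
  have h1 : idx1 (T := (n+1)+(k+1)) t = ⟨n, by omega⟩ := Fin.ext ht
  have h2 : idx2 (T := (n+1)+(k+1)) t = ⟨n+1, by omega⟩ := Fin.ext (by simp [idx2, ht])
  rw [show hT = (by omega : 1 ≤ (n+1)+(k+1)) from rfl] -- proof irrelevance
  simp only [h1, h2]
  exact keyB p₁ qdyn π n k f hf

end Key

/-- Appendix A.4 of "Off-Dynamics Reinforcement Learning": the expected total
reward correction under the source trajectory distribution equals the negative
sum of expected per-step transition KL divergences. -/
theorem expected_Δr_eq_neg_expKL {S A : Type*} [Fintype S] [Fintype A]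
    [Nonempty S] [Nonempty A] {T : ℕ} (hT : 1 ≤ T)
    (p₁ : PMF S) (qdyn pdyn : S → A → PMF S)
    (hq : ∀ s a s', 0 < qdyn s a s') (hp : ∀ s a s', 0 < pdyn s a s')
    (r : S → A → ℝ) (π : S → PMF A) :
    (∑ τ : Fin T → S × A, trajProb hT p₁ qdyn π τ *
        ∑ t : Fin (T - 1),
          Δr qdyn pdyn (τ (idx1 t)).1 (τ (idx1 t)).2 (τ (idx2 t)).1)
      = -∑ t : Fin (T - 1), ∑ τ : Fin T → S × A, trajProb hT p₁ qdyn π τ *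
          KL (qdyn (τ (idx1 t)).1 (τ (idx1 t)).2)
             (pdyn (τ (idx1 t)).1 (τ (idx1 t)).2) := by
  have hf : ∀ s a, ∑ s', (qdyn s a s').toReal *
      (Δr qdyn pdyn s a s' + KL (qdyn s a) (pdyn s a)) = 0 := by
    intro s a
    have hKL : KL (qdyn s a) (pdyn s a)
        = ∑ s', (qdyn s a s').toReal *
            (Real.log (qdyn s a s').toReal - Real.log (pdyn s a s').toReal) := by
      unfold KL
      refine Finset.sum_congr rfl fun s' _ => ?_
      rw [Real.log_div
        (ne_of_gt (ENNReal.toReal_pos (ne_of_gt (hq s a s')) ((qdyn s a).apply_ne_top s')))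
        (ne_of_gt (ENNReal.toReal_pos (ne_of_gt (hp s a s')) ((pdyn s a).apply_ne_top s')))]
    simp only [mul_add]
    rw [Finset.sum_add_distrib, ← Finset.sum_mul, pmf_sum_toReal, one_mul, hKL,
      ← Finset.sum_add_distrib]
    refine Finset.sum_eq_zero fun s' _ => ?_
    unfold Δr
    ring
  have hmain : ∀ t : Fin (T - 1),
      ∑ τ : Fin T → S × A, trajProb hT p₁ qdyn π τ *
        (Δr qdyn pdyn (τ (idx1 t)).1 (τ (idx1 t)).2 (τ (idx2 t)).1
          + KL (qdyn (τ (idx1 t)).1 (τ (idx1 t)).2) (pdyn (τ (idx1 t)).1 (τ (idx1 t)).2)) = 0 :=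
    fun t => keyBt hT t p₁ qdyn π
      (fun s a s' => Δr qdyn pdyn s a s' + KL (qdyn s a) (pdyn s a)) hf
  have hswap : (∑ τ : Fin T → S × A, trajProb hT p₁ qdyn π τ *
        ∑ t : Fin (T - 1),
          Δr qdyn pdyn (τ (idx1 t)).1 (τ (idx1 t)).2 (τ (idx2 t)).1)
      = ∑ t : Fin (T - 1), ∑ τ : Fin T → S × A, trajProb hT p₁ qdyn π τ *
          Δr qdyn pdyn (τ (idx1 t)).1 (τ (idx1 t)).2 (τ (idx2 t)).1 := by
    simp only [Finset.mul_sum]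
    exact Finset.sum_comm
  rw [hswap, eq_neg_iff_add_eq_zero, ← Finset.sum_add_distrib]
  refine Finset.sum_eq_zero fun t _ => ?_
  rw [← Finset.sum_add_distrib]
  have := hmain t
  simp only [mul_add] at this
  exact this
end

section
/- Under the trajectory setup, the change-of-measure identity for exponentiated returns holds: ∑_τ p_π(τ) · exp(∑_{t=1}^{T} r(s_t, a_t)) = ∑_τ q_π(τ) · exp(∑_{t=1}^{T} r(s_t, a_t) + ∑_{t=1}^{T−1} Δr(s_t, a_t, s_{t+1})). -/
open Finset

/-- Importance-sampling identity from Appendix A.3 of "Off-Dynamics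
Reinforcement Learning": the expected exponentiated return in the target domain
equals the expected exponentiated modified return (with the `Δr` correction) in
the source domain. -/
theorem change_of_measure_exp_return {S A : Type*} [Fintype S] [Fintype A]
    [Nonempty S] [Nonempty A] {T : ℕ} (hT : 1 ≤ T)
    (p₁ : PMF S) (qdyn pdyn : S → A → PMF S)
    (hq : ∀ s a s', 0 < qdyn s a s') (hp : ∀ s a s', 0 < pdyn s a s')
    (r : S → A → ℝ) (π : S → PMF A) :
    (∑ τ : Fin T → S × A, trajProb hT p₁ pdyn π τ *
        Real.exp (∑ t : Fin T, r (τ t).1 (τ t).2))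
      = ∑ τ : Fin T → S × A, trajProb hT p₁ qdyn π τ *
          Real.exp ((∑ t : Fin T, r (τ t).1 (τ t).2) +
            ∑ t : Fin (T - 1),
              Δr qdyn pdyn (τ (idx1 t)).1 (τ (idx1 t)).2 (τ (idx2 t)).1) := by
  refine Finset.sum_congr rfl fun τ _ => ?_
  have hqpos : ∀ (s : S) (a : A) (s' : S), 0 < (qdyn s a s').toReal := by
    intro s a s'
    exact ENNReal.toReal_pos (hq s a s').ne' (ne_top_of_le_ne_top ENNReal.one_ne_top
      ((qdyn s a).coe_le_one s'))
  have hppos : ∀ (s : S) (a : A) (s' : S), 0 < (pdyn s a s').toReal := by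
    intro s a s'
    exact ENNReal.toReal_pos (hp s a s').ne' (ne_top_of_le_ne_top ENNReal.one_ne_top
      ((pdyn s a).coe_le_one s'))
  have hD : ∀ t : Fin (T - 1),
      Real.exp (Δr qdyn pdyn (τ (idx1 t)).1 (τ (idx1 t)).2 (τ (idx2 t)).1)
        = (pdyn (τ (idx1 t)).1 (τ (idx1 t)).2 (τ (idx2 t)).1).toReal
          / (qdyn (τ (idx1 t)).1 (τ (idx1 t)).2 (τ (idx2 t)).1).toReal := by
    intro t
    rw [Δr, Real.exp_sub, Real.exp_log (hppos _ _ _), Real.exp_log (hqpos _ _ _)]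
  have hexp : Real.exp (∑ t : Fin (T - 1),
      Δr qdyn pdyn (τ (idx1 t)).1 (τ (idx1 t)).2 (τ (idx2 t)).1)
      = (∏ t : Fin (T - 1), (pdyn (τ (idx1 t)).1 (τ (idx1 t)).2 (τ (idx2 t)).1).toReal)
        / ∏ t : Fin (T - 1), (qdyn (τ (idx1 t)).1 (τ (idx1 t)).2 (τ (idx2 t)).1).toReal := by
    rw [Real.exp_sum, ← Finset.prod_div_distrib]
    exact Finset.prod_congr rfl fun t _ => hD t
  rw [Real.exp_add, hexp]
  have hQ : (∏ t : Fin (T - 1),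
      (qdyn (τ (idx1 t)).1 (τ (idx1 t)).2 (τ (idx2 t)).1).toReal) ≠ 0 :=
    ne_of_gt (Finset.prod_pos fun t _ => hqpos _ _ _)
  unfold trajProb
  field_simp
end
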